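/- arXiv:2307.03870 — 3 statements merged into one kernel-verified Lean document; each statement's English description precedes it below -/
import Mathlib

section
/- There is no EP-EFA S over the event-parameter domain X = ℕ whose flat marked data language equals the set of all strictly increasing sequences of natural numbers of even positive length, i.e. there is no EP-EFA S with L_fmd(S) = { a₁a₂…a_{2n} : n ≥ 1 and a_{i+1} > a_i for all i ∈ [1 : 2n−1] }. (Since this language is the flat marked data language of an EFA, this shows there exists an EFA that is not data-equivalent to any EP-EFA.) -/
attribute [local instance] Classical.propDecidable

universe u v w

/-- A symbolic transition of an EP-EFA: source and target states, event tag,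
step-length, and a guard given by its denotation (a set of parameter tuples
of length `len`). -/
structure SymTrans (Q : Type u) (E : Type v) (X : Type w) where
  src : Q
  tgt : Q
  tag : E
  len : ℕ
  guard : Set (List X)
  guard_len : ∀ l ∈ guard, l.length = len

/-- An Event-Parameters Extended Finite Automaton (EP-EFA): initial states,
marked states, and a set of symbolic transitions. -/
structure EPEFA (Q : Type u) (E : Type v) (X : Type w) where
  init : Set Q
  marked : Set Q
  trans : Set (SymTrans Q E X)

variable {Q : Type u} {E : Type v} {X : Type w}

/-- The flat data string of a parameterized string: the concatenation of all
parameter values in order. -/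
def flatData (u : List (E × List X)) : List X := (u.map Prod.snd).flatten

/-- The reverse of a parameterized string: events in reverse order, each
parameter tuple reversed. -/
def strRev (u : List (E × List X)) : List (E × List X) :=
  (u.map fun ev => (ev.1, ev.2.reverse)).reverse

/-- The reverse of a data string / observation: tuples in reverse order, each
tuple reversed. -/
def obsRev (w : List (List X)) : List (List X) := (w.map List.reverse).reverse

/-- The observation `θ(D(u))` of a parameterized string `u`, determined by the
observability set `ϑ`: strip event tags, delete unobservable parameter values,
drop empty tuples. -/
noncomputable def obsOf (ϑ : Set X) (u : List (E × List X)) : List (List X) :=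
  ((u.map Prod.snd).map fun l => l.filter fun a => a ∈ ϑ).filter fun l => l ≠ []

/-- A parameterized event `ev` triggers a concrete transition from `q` to `q'`. -/
def EPEFA.Step (S : EPEFA Q E X) (q : Q) (ev : E × List X) (q' : Q) : Prop :=
  ∃ t ∈ S.trans, t.src = q ∧ t.tgt = q' ∧ t.tag = ev.1 ∧ ev.2 ∈ t.guard

/-- `S.Path q u q'` : the parameterized string `u` labels a chain of concrete
transitions from `q` to `q'` (with `q →ε q` always). -/
inductive EPEFA.Path (S : EPEFA Q E X) : Q → List (E × List X) → Q → Prop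
  | nil (q : Q) : EPEFA.Path S q [] q
  | cons {q q' q'' : Q} {ev : E × List X} {u : List (E × List X)} :
      S.Step q ev q' → EPEFA.Path S q' u q'' → EPEFA.Path S q (ev :: u) q''

/-- The language between a set of source states and a set of target states. -/
def EPEFA.LBtw (S : EPEFA Q E X) (Q1 Q2 : Set Q) : Set (List (E × List X)) :=
  {u | ∃ q1 ∈ Q1, ∃ q2 ∈ Q2, S.Path q1 u q2}

/-- The generated language `L(S)`. -/
def EPEFA.Lang (S : EPEFA Q E X) : Set (List (E × List X)) :=
  S.LBtw S.init Set.univ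

/-- The marked language `L_m(S)`. -/
def EPEFA.LangM (S : EPEFA Q E X) : Set (List (E × List X)) :=
  S.LBtw S.init S.marked

/-- The flat marked data language `L_fmd(S)`. -/
def EPEFA.Lfmd (S : EPEFA Q E X) : Set (List X) := flatData '' S.LangM

/-- The set of observations `Θ(S)`. -/
def EPEFA.ThetaSet (S : EPEFA Q E X) (ϑ : Set X) : Set (List (List X)) :=
  obsOf ϑ '' S.Lang

/-- The state estimation `Est^S(w)`. -/
def EPEFA.Est (S : EPEFA Q E X) (ϑ : Set X) (w : List (List X)) : Set Q :=
  {q | ∃ q0 ∈ S.init, ∃ u, S.Path q0 u q ∧ obsOf ϑ u = w}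

/-- The reverse of a symbolic transition: source and target swapped, guard
denotation reversed tuple-wise. -/
def SymTrans.rev (t : SymTrans Q E X) : SymTrans Q E X where
  src := t.tgt
  tgt := t.src
  tag := t.tag
  len := t.len
  guard := {l | l.reverse ∈ t.guard}
  guard_len := fun l hl => by simpa using t.guard_len l.reverse hl

/-- The reverse EP-EFA `Sʳ`: all states initial, reversed transitions. -/
def EPEFA.rev (S : EPEFA Q E X) : EPEFA Q E X where
  init := Set.univ
  marked := S.init
  trans := SymTrans.rev '' S.trans

/-- Current-state opacity of `S` w.r.t. secret states `Qs`, non-secret states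
`Qns` and the observation function determined by `ϑ`. -/
def EPEFA.CSOpaque (S : EPEFA Q E X) (ϑ : Set X) (Qs Qns : Set Q) : Prop :=
  ∀ u ∈ S.LBtw S.init Qs, ∃ v ∈ S.LBtw S.init Qns, obsOf ϑ u = obsOf ϑ v

/-- Initial-state opacity of `S` w.r.t. secret initial states `Qs`, non-secret
initial states `Qns` and the observation function determined by `ϑ`. -/
def EPEFA.ISOpaque (S : EPEFA Q E X) (ϑ : Set X) (Qs Qns : Set Q) : Prop :=
  ∀ u ∈ S.LBtw Qs Set.univ, ∃ v ∈ S.LBtw Qns Set.univ, obsOf ϑ u = obsOf ϑ v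

/-- Infinite-step opacity of `S` w.r.t. secret states `Qs`, non-secret states
`Qns` and the observation function determined by `ϑ`: every run from an
initial state through a secret state is matched, observation-wise (both the
prefix up to the secret state and the suffix), by a run through a non-secret
state. -/
def EPEFA.InfSOpaque (S : EPEFA Q E X) (ϑ : Set X) (Qs Qns : Set Q) : Prop :=
  ∀ q0 ∈ S.init, ∀ qs ∈ Qs, ∀ (q : Q) (u u2 : List (E × List X)),
    S.Path q0 u qs → S.Path qs u2 q →
    ∃ q0' ∈ S.init, ∃ qn ∈ Qns, ∃ (q' : Q) (v v2 : List (E × List X)),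
      S.Path q0' v qn ∧ S.Path qn v2 q' ∧
      obsOf ϑ u = obsOf ϑ v ∧ obsOf ϑ u2 = obsOf ϑ v2

/-! Every guard reads at most `L` parameters, so an accepted word longer than `L` is cut by
some intermediate state `q` into two nonempty data pieces. Among infinitely many words, two
are cut at the same state, and the prefix of one can be glued to the suffix of the other.
For the increasing blocks `[kN, kN + N)`, gluing a prefix of a later block to a suffix of an
earlier one yields an accepted word that is not increasing. -/

@[simp]
theorem flatData_nil : flatData ([] : List (E × List X)) = [] := rfl

@[simp]
theorem flatData_cons (ev : E × List X) (u : List (E × List X)) :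
    flatData (ev :: u) = ev.2 ++ flatData u := rfl

@[simp]
theorem flatData_append (u v : List (E × List X)) :
    flatData (u ++ v) = flatData u ++ flatData v := by
  simp [flatData]

theorem exists_append_eq_flatData_ne_nil {L : ℕ} {u : List (E × List X)}
    (hu : ∀ ev ∈ u, ev.2.length ≤ L) (hlen : L < (flatData u).length) :
    ∃ u₁ u₂, u = u₁ ++ u₂ ∧ flatData u₁ ≠ [] ∧ flatData u₂ ≠ [] := by
  induction u with
  | nil => simp at hlen
  | cons ev u ih =>
    by_cases hev : ev.2 = []
    · simp only [flatData_cons, hev, List.nil_append] at hlen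
      obtain ⟨u₁, u₂, rfl, h₁, h₂⟩ := ih (fun e he => hu e (List.mem_cons_of_mem _ he)) hlen
      exact ⟨ev :: u₁, u₂, rfl, by simpa [hev] using h₁, h₂⟩
    · refine ⟨[ev], u, rfl, by simpa using hev, fun hu' => ?_⟩
      have := hu ev List.mem_cons_self
      simp only [flatData_cons, hu', List.append_nil] at hlen
      omega

namespace EPEFA

variable {S : EPEFA Q E X}

theorem path_append_iff {q q'' : Q} {u v : List (E × List X)} :
    S.Path q (u ++ v) q'' ↔ ∃ q', S.Path q u q' ∧ S.Path q' v q'' := by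
  induction u generalizing q with
  | nil => exact ⟨fun h => ⟨q, .nil q, h⟩, fun ⟨_, .nil _, h⟩ => h⟩
  | cons ev u ih =>
    constructor
    · rintro (_ | ⟨hstep, hrest⟩)
      obtain ⟨q', hu, hv⟩ := ih.mp hrest
      exact ⟨q', .cons hstep hu, hv⟩
    · rintro ⟨q', hu, hv⟩
      cases hu with
      | cons hstep hu => exact .cons hstep (ih.mpr ⟨q', hu, hv⟩)

theorem Path.length_snd_le {L : ℕ} (hL : ∀ t ∈ S.trans, t.len ≤ L) {q q' : Q}
    {u : List (E × List X)} (h : S.Path q u q') : ∀ ev ∈ u, ev.2.length ≤ L := by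
  induction h with
  | nil => simp
  | cons hstep _ ih =>
    obtain ⟨t, ht, -, -, -, hguard⟩ := hstep
    rintro ev (_ | ⟨_, hev⟩)
    · exact (t.guard_len _ hguard).trans_le (hL t ht)
    · exact ih ev hev

theorem append_mem_Lfmd {q : Q} {w₁ w₂ : List X}
    (h₁ : w₁ ∈ flatData '' S.LBtw S.init {q}) (h₂ : w₂ ∈ flatData '' S.LBtw {q} S.marked) :
    w₁ ++ w₂ ∈ S.Lfmd := by
  obtain ⟨u₁, ⟨q₀, hq₀, _, rfl, hu₁⟩, rfl⟩ := h₁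
  obtain ⟨u₂, ⟨_, rfl, qₘ, hqₘ, hu₂⟩, rfl⟩ := h₂
  exact ⟨u₁ ++ u₂, ⟨q₀, hq₀, qₘ, hqₘ, path_append_iff.mpr ⟨_, hu₁, hu₂⟩⟩, flatData_append _ _⟩

theorem exists_split_of_mem_Lfmd {L : ℕ} (hL : ∀ t ∈ S.trans, t.len ≤ L) {w : List X}
    (hw : w ∈ S.Lfmd) (hlen : L < w.length) :
    ∃ q, ∃ w₁ ∈ flatData '' S.LBtw S.init {q}, ∃ w₂ ∈ flatData '' S.LBtw {q} S.marked,
      w₁ ≠ [] ∧ w₂ ≠ [] ∧ w = w₁ ++ w₂ := by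
  obtain ⟨u, ⟨q₀, hq₀, qₘ, hqₘ, hu⟩, rfl⟩ := hw
  obtain ⟨u₁, u₂, rfl, h₁, h₂⟩ := exists_append_eq_flatData_ne_nil (hu.length_snd_le hL) hlen
  obtain ⟨q, hu₁, hu₂⟩ := path_append_iff.mp hu
  exact ⟨q, _, ⟨u₁, ⟨q₀, hq₀, q, rfl, hu₁⟩, rfl⟩, _, ⟨u₂, ⟨q, rfl, qₘ, hqₘ, hu₂⟩, rfl⟩,
    h₁, h₂, flatData_append _ _⟩

theorem exists_lt_append_mem_Lfmd [Finite Q] {L : ℕ} (hL : ∀ t ∈ S.trans, t.len ≤ L)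
    {ι : Type*} [LinearOrder ι] [Infinite ι] (w : ι → List X) (hw : ∀ i, w i ∈ S.Lfmd)
    (hlen : ∀ i, L < (w i).length) :
    ∃ i j, i < j ∧ ∃ a b c d, w i = a ++ b ∧ w j = c ++ d ∧ b ≠ [] ∧ c ≠ [] ∧
      c ++ b ∈ S.Lfmd := by
  choose q w₁ hw₁ w₂ hw₂ hne₁ hne₂ hsplit using
    fun i => exists_split_of_mem_Lfmd hL (hw i) (hlen i)
  obtain ⟨i, j, hij, hq⟩ :=
    Set.finite_univ.exists_lt_map_eq_of_forall_mem (f := q) (fun _ => Set.mem_univ _)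
  exact ⟨i, j, hij, _, _, _, _, hsplit i, hsplit j, hne₂ i, hne₁ j,
    append_mem_Lfmd (hw₁ j) (hq ▸ hw₂ i)⟩

end EPEFA

/-- There is no EP-EFA (finite state set, finite event-tag set, finitely many
symbolic transitions) over the event-parameter domain `ℕ` whose flat marked
data language is the set of all strictly increasing sequences of natural
numbers of even positive length. -/
theorem no_epefa_for_increasing_even_length :
    ¬ ∃ (Q : Type) (E : Type) (_ : Finite Q) (_ : Finite E) (S : EPEFA Q E ℕ),
        S.trans.Finite ∧
        S.Lfmd = {l : List ℕ | ∃ n : ℕ, 1 ≤ n ∧ l.length = 2 * n ∧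
          l.Chain' (· < ·)} := by
  rintro ⟨Q, E, _, -, S, hfin, hS⟩
  obtain ⟨L, hL⟩ : ∃ L, ∀ t ∈ S.trans, t.len ≤ L := by
    obtain ⟨L, hL⟩ := (hfin.image SymTrans.len).bddAbove
    exact ⟨L, fun t ht => hL (Set.mem_image_of_mem _ ht)⟩
  set N := 2 * (L + 1)
  have hblock : ∀ k, List.range' (k * N) N ∈ S.Lfmd := fun k => by
    rw [hS]
    exact ⟨L + 1, by omega, by simp [N], List.isChain_lt_range' _ _ Nat.one_pos⟩
  obtain ⟨i, j, hij, a, b, c, d, hi, hj, hb, hc, hcb⟩ :=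
    S.exists_lt_append_mem_Lfmd hL (fun k => List.range' (k * N) N) hblock
      (fun _ => by simp [N]; omega)
  rw [hS] at hcb
  obtain ⟨-, -, -, hchain⟩ := hcb
  obtain ⟨x, hx⟩ := List.exists_mem_of_ne_nil c hc
  obtain ⟨y, hy⟩ := List.exists_mem_of_ne_nil b hb
  have hxy : x < y := (List.pairwise_append.mp (List.isChain_iff_pairwise.mp hchain)).2.2 x hx y hy
  have hxj := List.mem_range'_1.mp (hj ▸ List.mem_append_left d hx)
  have hyi := List.mem_range'_1.mp (hi ▸ List.mem_append_right a hy)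
  have : (i + 1) * N ≤ j * N := Nat.mul_le_mul_right N hij
  nlinarith
end

section
/- Let S be an EP-EFA with (static) observation function θ. For every observation w ∈ Θ(S) and every observable unit ŵ with w·ŵ ∈ Θ(S), the state estimation satisfies the recursion Est^S(w·ŵ) = { q̂ ∈ Q : there exist q ∈ Est^S(w) and a parameterized string û with q →û q̂ and θ(D(û)) = ŵ }. -/
attribute [local instance] Classical.propDecidable

universe u v w

variable {Q : Type u} {E : Type v} {X : Type w}

lemma obsOf_append (ϑ : Set X) (u v : List (E × List X)) :
    obsOf ϑ (u ++ v) = obsOf ϑ u ++ obsOf ϑ v := by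
  simp [obsOf, List.filter_append]

lemma obsOf_cons (ϑ : Set X) (ev : E × List X) (u : List (E × List X)) :
    obsOf ϑ (ev :: u) =
      if (ev.2.filter fun a => a ∈ ϑ) = [] then obsOf ϑ u
      else (ev.2.filter fun a => a ∈ ϑ) :: obsOf ϑ u := by
  by_cases h : (ev.2.filter fun a => a ∈ ϑ) = [] <;>
    simp [obsOf, List.filter_cons, h]

lemma obsOf_split (ϑ : Set X) :
    ∀ (u : List (E × List X)) (a b : List (List X)), obsOf ϑ u = a ++ b →
      ∃ u1 u2, u = u1 ++ u2 ∧ obsOf ϑ u1 = a ∧ obsOf ϑ u2 = b := by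
  intro u
  induction u with
  | nil =>
    intro a b h
    simp [obsOf] at h
    exact ⟨[], [], by simp, by simp [obsOf, h.1], by simp [obsOf, h.2]⟩
  | cons ev u ih =>
    intro a b h
    rw [obsOf_cons] at h
    by_cases he : (ev.2.filter fun x => x ∈ ϑ) = []
    · rw [if_pos he] at h
      obtain ⟨u1, u2, hu, h1, h2⟩ := ih a b h
      exact ⟨ev :: u1, u2, by simp [hu], by rw [obsOf_cons, if_pos he, h1], h2⟩
    · rw [if_neg he] at h
      cases a with
      | nil =>
        exact ⟨[], ev :: u, by simp, by simp [obsOf], by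
          rw [obsOf_cons, if_neg he]; simpa using h⟩
      | cons x a =>
        simp only [List.cons_append, List.cons.injEq] at h
        obtain ⟨hx, h'⟩ := h
        obtain ⟨u1, u2, hu, h1, h2⟩ := ih a b h'
        exact ⟨ev :: u1, u2, by simp [hu], by rw [obsOf_cons, if_neg he, h1, hx], h2⟩

lemma path_append {S : EPEFA Q E X} {q q' q'' : Q} {u v : List (E × List X)}
    (h1 : S.Path q u q') (h2 : S.Path q' v q'') : S.Path q (u ++ v) q'' := by
  induction h1 with
  | nil => exact h2
  | cons hs _ ih => exact EPEFA.Path.cons hs (ih h2)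

lemma path_split {S : EPEFA Q E X} :
    ∀ (u v : List (E × List X)) {q q'' : Q}, S.Path q (u ++ v) q'' →
      ∃ q', S.Path q u q' ∧ S.Path q' v q'' := by
  intro u
  induction u with
  | nil => intro v q q'' h; exact ⟨q, EPEFA.Path.nil q, h⟩
  | cons ev u ih =>
    intro v q q'' h
    cases h with
    | cons hs hp =>
      obtain ⟨q', hp1, hp2⟩ := ih v hp
      exact ⟨q', EPEFA.Path.cons hs hp1, hp2⟩

/-- Recursion of the state estimation: for every observation `w ∈ Θ(S)` and
every observable unit `wu` with `w·wu ∈ Θ(S)`,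
`Est^S(w·wu)` consists of the states reachable from a state of `Est^S(w)` by a
parameterized string whose observation is exactly the unit `wu`. -/
theorem est_recursion (S : EPEFA Q E X) (ϑ : Set X)
    (w : List (List X)) (hw : w ∈ S.ThetaSet ϑ)
    (wu : List X) (hne : wu ≠ []) (hobs : ∀ a ∈ wu, a ∈ ϑ)
    (hww : w ++ [wu] ∈ S.ThetaSet ϑ) :
    S.Est ϑ (w ++ [wu]) =
      {q' : Q | ∃ q ∈ S.Est ϑ w, ∃ u : List (E × List X),
        S.Path q u q' ∧ obsOf ϑ u = [wu]} := by
  ext q'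
  constructor
  · rintro ⟨q0, hq0, u, hpath, hobs⟩
    obtain ⟨u1, u2, hu, h1, h2⟩ := obsOf_split ϑ u w [wu] hobs
    subst hu
    obtain ⟨q, hp1, hp2⟩ := path_split u1 u2 hpath
    exact ⟨q, ⟨q0, hq0, u1, hp1, h1⟩, u2, hp2, h2⟩
  · rintro ⟨q, ⟨q0, hq0, u1, hp1, ho1⟩, u2, hp2, ho2⟩
    exact ⟨q0, hq0, u1 ++ u2, path_append hp1 hp2, by rw [obsOf_append, ho1, ho2]⟩
end

section
/- Let S be an EP-EFA with secret initial states Q_s ⊆ Q₀, non-secret initial states Q_ns ⊆ Q₀, and static observation function θ, and let Sʳ = (Q, Σ, X, Q₀ʳ, Tʳ) with Q₀ʳ = Q be its reverse. Then S is initial-state opaque w.r.t. Q_s, Q_ns and θ if and only if Sʳ is current-state opaque w.r.t. Q_s, Q_ns and θ. -/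
attribute [local instance] Classical.propDecidable

universe u v w

variable {Q : Type u} {E : Type v} {X : Type w}

lemma step_rev {S : EPEFA Q E X} {q q' : Q} {ev : E × List X}
    (h : S.Step q ev q') : S.rev.Step q' (ev.1, ev.2.reverse) q := by
  obtain ⟨t, ht, hsrc, htgt, htag, hg⟩ := h
  exact ⟨t.rev, ⟨t, ht, rfl⟩, htgt, hsrc, htag, by simpa [SymTrans.rev] using hg⟩

lemma rev_step {S : EPEFA Q E X} {q q' : Q} {ev : E × List X}
    (h : S.rev.Step q ev q') : S.Step q' (ev.1, ev.2.reverse) q := by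
  obtain ⟨t', ⟨t, ht, rfl⟩, hsrc, htgt, htag, hg⟩ := h
  exact ⟨t, ht, htgt, hsrc, htag, by simpa [SymTrans.rev] using hg⟩

lemma path_rev {S : EPEFA Q E X} {q q' : Q} {u : List (E × List X)}
    (h : S.Path q u q') : S.rev.Path q' (strRev u) q := by
  induction h with
  | nil => exact EPEFA.Path.nil _
  | @cons q q' q'' ev u hs _ ih =>
      have h' : strRev (ev :: u) = strRev u ++ [(ev.1, ev.2.reverse)] := by
        simp [strRev]
      rw [h']
      exact path_append ih (EPEFA.Path.cons (step_rev hs) (EPEFA.Path.nil _))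

lemma path_of_rev {S : EPEFA Q E X} {q q' : Q} {u : List (E × List X)}
    (h : S.rev.Path q u q') : S.Path q' (strRev u) q := by
  induction h with
  | nil => exact EPEFA.Path.nil _
  | @cons q q' q'' ev u hs _ ih =>
      have h' : strRev (ev :: u) = strRev u ++ [(ev.1, ev.2.reverse)] := by
        simp [strRev]
      rw [h']
      exact path_append ih (EPEFA.Path.cons (rev_step hs) (EPEFA.Path.nil _))

lemma obsOf_strRev (ϑ : Set X) (u : List (E × List X)) :
    obsOf ϑ (strRev u) = obsRev (obsOf (E := E) ϑ u) := by
  simp only [obsOf, strRev, obsRev, List.map_reverse, List.map_map,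
    List.filter_reverse, List.filter_map]
  congr 1
  · congr 1
    · funext ev
      simp [Function.comp, List.filter_reverse]
    · apply List.filter_congr
      intro x _
      simp [Function.comp, List.filter_reverse]

lemma obsRev_obsRev (w : List (List X)) : obsRev (obsRev w) = w := by
  simp [obsRev, List.map_reverse, List.map_map, Function.comp]

/-- An EP-EFA `S` is initial-state opaque w.r.t. secret initial states `Qs`,
non-secret initial states `Qns` and the static observation function determined
by `ϑ` iff its reverse `Sʳ` is current-state opaque w.r.t. `Qs`, `Qns` and the
same observation function. -/
theorem iso_iff_cso_of_reverse (S : EPEFA Q E X) (ϑ : Set X) (Qs Qns : Set Q)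
    (hs : Qs ⊆ S.init) (hns : Qns ⊆ S.init) :
    S.ISOpaque ϑ Qs Qns ↔ S.rev.CSOpaque ϑ Qs Qns := by
  constructor
  · intro hiso u hu
    obtain ⟨q1, -, q2, hq2, hp⟩ := hu
    have hp' : S.Path q2 (strRev u) q1 := path_of_rev hp
    obtain ⟨v, ⟨qn, hqn, qv, -, hpv⟩, hobs⟩ :=
      hiso (strRev u) ⟨q2, hq2, q1, trivial, hp'⟩
    refine ⟨strRev v, ⟨qv, trivial, qn, hqn, path_rev hpv⟩, ?_⟩
    rw [obsOf_strRev]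
    have := congrArg obsRev hobs
    rw [obsOf_strRev, obsRev_obsRev] at this
    exact this
  · intro hcso u hu
    obtain ⟨q1, hq1, q2, -, hp⟩ := hu
    have hp' : S.rev.Path q2 (strRev u) q1 := path_rev hp
    obtain ⟨v, ⟨qv, -, qn, hqn, hpv⟩, hobs⟩ :=
      hcso (strRev u) ⟨q2, trivial, q1, hq1, hp'⟩
    refine ⟨strRev v, ⟨qn, hqn, qv, trivial, path_of_rev hpv⟩, ?_⟩
    rw [obsOf_strRev]
    have := congrArg obsRev hobs
    rw [obsOf_strRev, obsRev_obsRev] at this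
    exact this
end
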